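/- arXiv:2202.03383 — 2 statements merged into one kernel-verified Lean document; each statement's English description precedes it below -/
import Mathlib

section
/- Let d ∈ ℕ, m ∈ ℝ, ε ∈ (0, 1/2], and a ∈ Ŝ^m(ℝ^d × ℝ^d). Let χ, χ̃ ∈ C_c^∞(ℝ^d) with values in [0,1] such that supp χ ⊆ {|y| ≤ 1} and dist(supp(1 − χ̃), supp χ) > 0. For k ∈ ℕ set χ_k(y) := χ(8 k^{1/2−ε} y) and χ̃_k(x) := χ̃(8 k^{1/2−ε} x). Then for every compact set K ⊆ ℝ^d × ℝ^d, all multi-indices α, β ∈ ℕ^d, and every N ∈ ℕ, there exist C > 0 and k₀ ∈ ℕ such that for all k ≥ k₀, sup_{(x,y) ∈ K} |∂_x^α ∂_y^β [ (1 − χ̃_k(x)) · a(x,y,k) · χ_k(y) ]| ≤ C k^{−N}. -/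
/-!
Write `c_k = 8 k^{1/2-ε}`. By the Leibniz rule, `∂_x^α ∂_y^β [(1 - χ̃(c_k x)) a(x,y,k) χ(c_k y)]`
is a finite sum of terms `c_k^j ψ(c_k x, c_k y) ∂_x^A ∂_y^B a(x,y,k)` in which `ψ` is a derivative
of `(x, y) ↦ (1 - χ̃(x)) χ(y)`; since partial derivatives commute, differentiating such a term
again gives terms of the same shape. Every such `ψ` has bounded derivatives and vanishes unless
`|c_k x - c_k y| ≥ δ`, i.e. unless `√k |x - y| ≥ δ k^ε / 8`. There the off-diagonal factor
`(1 + √k |x - y|)^{-N'}` of the symbol estimate is `O(k^{-εN'})`, which for large `N'` beats the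
polynomial growth `c_k^j k^{m + (|A| + |B|)/2} (1 + √k |x| + √k |y|)^l` on a bounded set.
-/

open MeasureTheory

noncomputable section

/-- `ℝ^d` with the Euclidean norm. -/
abbrev Vec (d : ℕ) : Type := EuclideanSpace ℝ (Fin d)

/-- Partial derivative in the first variable, in the `i`-th coordinate direction. -/
noncomputable def pdX {d : ℕ} (i : Fin d) (f : Vec d → Vec d → ℂ) : Vec d → Vec d → ℂ :=
  fun x y => fderiv ℝ (fun x' => f x' y) x (EuclideanSpace.single i (1 : ℝ))

/-- Partial derivative in the second variable, in the `i`-th coordinate direction. -/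
noncomputable def pdY {d : ℕ} (i : Fin d) (f : Vec d → Vec d → ℂ) : Vec d → Vec d → ℂ :=
  fun x y => fderiv ℝ (fun y' => f x y') y (EuclideanSpace.single i (1 : ℝ))

/-- Iterated mixed partial derivative `∂_x^α ∂_y^β`. -/
noncomputable def mpd {d : ℕ} (α β : Fin d → ℕ) (f : Vec d → Vec d → ℂ) :
    Vec d → Vec d → ℂ :=
  (List.finRange d).foldr (fun i g => (pdX i)^[α i] g)
    ((List.finRange d).foldr (fun i g => (pdY i)^[β i] g) f)

/-- The semiclassical symbol space `Ŝ^m(ℝ^d × ℝ^d)`: families `a(·,·,k)`, `k ∈ ℕ`, of smooth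
functions such that for all multi-indices `α, β` there are `l, k₀` so that for every `N > 0`
there is `C > 0` with
`|∂_x^α ∂_y^β a(x,y,k)| ≤ C k^{m+(|α|+|β|)/2} (1+√k|x|+√k|y|)^l / (1+√k|x−y|)^N`
for all `x, y` and all `k ≥ k₀`. -/
def SymbClass (d : ℕ) (m : ℝ) (a : ℕ → Vec d → Vec d → ℂ) : Prop :=
  (∀ k : ℕ, ContDiff ℝ (⊤ : ℕ∞) (fun p : Vec d × Vec d => a k p.1 p.2)) ∧
  ∀ α β : Fin d → ℕ, ∃ l : ℕ, ∃ k₀ : ℕ, ∀ N : ℝ, 0 < N → ∃ C : ℝ, 0 < C ∧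
    ∀ k : ℕ, k₀ ≤ k → ∀ x y : Vec d,
      ‖mpd α β (a k) x y‖ ≤
        C * (k : ℝ) ^ (m + (((∑ i, α i) + (∑ i, β i) : ℕ) : ℝ) / 2) *
          (1 + Real.sqrt k * ‖x‖ + Real.sqrt k * ‖y‖) ^ l /
          (1 + Real.sqrt k * ‖x - y‖) ^ N

/-- The space `Ŝ(ℝ^d × ℝ^d)` of smooth functions rapidly decreasing off the diagonal:
for all multi-indices `α, β` there is `l` so that for every `N > 0` there is `C > 0` with
`|∂_x^α ∂_y^β a(x,y)| ≤ C (1+|x|+|y|)^l / (1+|x−y|)^N` for all `x, y`. -/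
def SchwartzOffDiag (d : ℕ) (a : Vec d → Vec d → ℂ) : Prop :=
  ContDiff ℝ (⊤ : ℕ∞) (fun p : Vec d × Vec d => a p.1 p.2) ∧
  ∀ α β : Fin d → ℕ, ∃ l : ℕ, ∀ N : ℝ, 0 < N → ∃ C : ℝ, 0 < C ∧
    ∀ x y : Vec d,
      ‖mpd α β a x y‖ ≤ C * (1 + ‖x‖ + ‖y‖) ^ l / (1 + ‖x - y‖) ^ N

open Set Function Filter Asymptotics
open scoped ContDiff

section FoldrIterate

variable {ι γ : Type*} (P : ι → γ → γ)

theorem mapsTo_foldr_iterate {S : Set γ} (hP : ∀ i, MapsTo (P i) S S) (α : ι → ℕ)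
    (L : List ι) : MapsTo (fun g => L.foldr (fun i g => (P i)^[α i] g) g) S S := by
  induction L with
  | nil => exact mapsTo_id S
  | cons i L ih => exact ((hP i).iterate (α i)).comp ih

theorem iterate_comp_mem {κ : Type*} {S : Set (κ → γ)} {f : γ → γ} (hf : ∀ Φ ∈ S, f ∘ Φ ∈ S)
    (n : ℕ) {Φ : κ → γ} (hΦ : Φ ∈ S) : f^[n] ∘ Φ ∈ S := by
  induction n with
  | zero => exact hΦ
  | succ n ih => rw [iterate_succ', comp_assoc]; exact hf _ ih

theorem foldr_iterate_comp_mem {κ : Type*} {S : Set (κ → γ)} (hP : ∀ i, ∀ Φ ∈ S, P i ∘ Φ ∈ S)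
    (α : ι → ℕ) (L : List ι) {Φ : κ → γ} (hΦ : Φ ∈ S) :
    (fun g => L.foldr (fun i g => (P i)^[α i] g) g) ∘ Φ ∈ S := by
  induction L with
  | nil => exact hΦ
  | cons i L ih => exact iterate_comp_mem (hP i) (α i) ih

theorem Set.MapsTo.iterate_commute {S : Set γ} {f D : γ → γ} (hf : MapsTo f S S)
    (hD : ∀ g ∈ S, D (f g) = f (D g)) (n : ℕ) {g : γ} (hg : g ∈ S) :
    D (f^[n] g) = f^[n] (D g) := by
  induction n with
  | zero => rfl
  | succ n ih => rw [iterate_succ_apply', iterate_succ_apply', hD _ (hf.iterate n hg), ih]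

theorem foldr_iterate_commute {S : Set γ} (hP : ∀ i, MapsTo (P i) S S) {D : γ → γ}
    (hD : ∀ i, ∀ g ∈ S, D (P i g) = P i (D g)) (α : ι → ℕ) (L : List ι) {g : γ} (hg : g ∈ S) :
    D (L.foldr (fun i g => (P i)^[α i] g) g) = L.foldr (fun i g => (P i)^[α i] g) (D g) := by
  induction L with
  | nil => rfl
  | cons i L ih =>
    rw [List.foldr_cons, List.foldr_cons,
      (hP i).iterate_commute (hD i) _ (mapsTo_foldr_iterate P hP α L hg), ih]

theorem foldr_iterate_add_single [DecidableEq ι] {S : Set γ} (hP : ∀ i, MapsTo (P i) S S)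
    (hcomm : ∀ i j, ∀ g ∈ S, P i (P j g) = P j (P i g)) (α : ι → ℕ) {i : ι} {L : List ι}
    (hL : L.Nodup) (hi : i ∈ L) {g : γ} (hg : g ∈ S) :
    L.foldr (fun j g => (P j)^[((α + Pi.single i 1 : ι → ℕ) j)] g) g
      = P i (L.foldr (fun j g => (P j)^[α j] g) g) := by
  induction L with
  | nil => simp at hi
  | cons j L ih =>
    obtain ⟨hjL, hL⟩ := List.nodup_cons.mp hL
    rw [List.foldr_cons, List.foldr_cons]
    rcases eq_or_ne j i with rfl | hji
    · have hrest : L.foldr (fun j' g => (P j')^[((α + Pi.single j 1 : ι → ℕ) j')] g) g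
          = L.foldr (fun j' g => (P j')^[α j'] g) g :=
        List.foldr_ext _ _ _ fun j' hj' _ => by
          rw [Pi.add_apply, Pi.single_eq_of_ne (ne_of_mem_of_not_mem hj' hjL), add_zero]
      rw [hrest, Pi.add_apply, Pi.single_eq_same, iterate_succ_apply']
    · rw [Pi.add_apply, Pi.single_eq_of_ne hji, add_zero,
        ih hL ((List.mem_cons.mp hi).resolve_left hji.symm),
        (hP j).iterate_commute (fun h hh => hcomm i j h hh) _ (mapsTo_foldr_iterate P hP α L hg)]

end FoldrIterate

section Schwarz
variable {E G : Type*} [NormedAddCommGroup E] [NormedSpace ℝ E] [NormedAddCommGroup G]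
  [NormedSpace ℝ G]

theorem fderiv_fderiv_apply_comm {F : E → G} (hF : ContDiff ℝ 2 F) (p u v : E) :
    fderiv ℝ (fun q => fderiv ℝ F q v) p u = fderiv ℝ (fun q => fderiv ℝ F q u) p v := by
  have hF' : Differentiable ℝ (fderiv ℝ F) :=
    (hF.fderiv_right (m := 1) le_rfl).differentiable one_ne_zero
  rw [fderiv_clm_apply (hF' p) (differentiableAt_const v),
    fderiv_clm_apply (hF' p) (differentiableAt_const u)]
  simpa using (hF.contDiffAt.isSymmSndFDerivAt (by simp) u v)

end Schwarz

section PartialDerivatives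
variable {d : ℕ}

def dirDeriv (w : Vec d × Vec d) (f : Vec d → Vec d → ℂ) : Vec d → Vec d → ℂ :=
  fun x y => fderiv ℝ (uncurry f) (x, y) w

theorem pdX_eq_dirDeriv (i : Fin d) {f : Vec d → Vec d → ℂ} (hf : Differentiable ℝ (uncurry f)) :
    pdX i f = dirDeriv (EuclideanSpace.single i 1, 0) f := by
  funext x y
  have h : HasFDerivAt (fun x' => f x' y)
      ((fderiv ℝ (uncurry f) (x, y)).comp (ContinuousLinearMap.inl ℝ (Vec d) (Vec d))) x :=
    ((hf (x, y)).hasFDerivAt.comp x (hasFDerivAt_prodMk_left (𝕜 := ℝ) x y) :)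
  rw [pdX, h.fderiv]
  rfl

theorem pdY_eq_dirDeriv (i : Fin d) {f : Vec d → Vec d → ℂ} (hf : Differentiable ℝ (uncurry f)) :
    pdY i f = dirDeriv (0, EuclideanSpace.single i 1) f := by
  funext x y
  have h : HasFDerivAt (fun y' => f x y')
      ((fderiv ℝ (uncurry f) (x, y)).comp (ContinuousLinearMap.inr ℝ (Vec d) (Vec d))) y :=
    ((hf (x, y)).hasFDerivAt.comp y (hasFDerivAt_prodMk_right (𝕜 := ℝ) x y) :)
  rw [pdY, h.fderiv]
  rfl

theorem contDiff_dirDeriv (w : Vec d × Vec d) {f : Vec d → Vec d → ℂ}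
    (hf : ContDiff ℝ ∞ (uncurry f)) : ContDiff ℝ ∞ (uncurry (dirDeriv w f)) :=
  (hf.fderiv_right (m := ∞) le_rfl).clm_apply contDiff_const

theorem dirDeriv_comm (u v : Vec d × Vec d) {f : Vec d → Vec d → ℂ}
    (hf : ContDiff ℝ ∞ (uncurry f)) : dirDeriv u (dirDeriv v f) = dirDeriv v (dirDeriv u f) := by
  funext x y
  exact fderiv_fderiv_apply_comm (hf.of_le (WithTop.coe_le_coe.mpr le_top)) (x, y) u v

theorem mapsTo_pdX (i : Fin d) :
    MapsTo (pdX i) {f | ContDiff ℝ ∞ (uncurry f)} {f | ContDiff ℝ ∞ (uncurry f)} :=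
  fun f (hf : ContDiff ℝ ∞ (uncurry f)) => by
    rw [mem_ofPred_eq, pdX_eq_dirDeriv i (hf.differentiable (by simp))]
    exact contDiff_dirDeriv _ hf

theorem mapsTo_pdY (i : Fin d) :
    MapsTo (pdY i) {f | ContDiff ℝ ∞ (uncurry f)} {f | ContDiff ℝ ∞ (uncurry f)} :=
  fun f (hf : ContDiff ℝ ∞ (uncurry f)) => by
    rw [mem_ofPred_eq, pdY_eq_dirDeriv i (hf.differentiable (by simp))]
    exact contDiff_dirDeriv _ hf

theorem mpd_zero_zero (f : Vec d → Vec d → ℂ) : mpd 0 0 f = f := by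
  simp [mpd]

theorem dirDeriv_add (w : Vec d × Vec d) {f g : Vec d → Vec d → ℂ}
    (hf : Differentiable ℝ (uncurry f)) (hg : Differentiable ℝ (uncurry g)) :
    dirDeriv w (f + g) = dirDeriv w f + dirDeriv w g := by
  funext x y
  show fderiv ℝ (uncurry f + uncurry g) (x, y) w = _
  rw [fderiv_add (hf (x, y)) (hg (x, y))]
  rfl

theorem dirDeriv_zero (w : Vec d × Vec d) : dirDeriv w (0 : Vec d → Vec d → ℂ) = 0 := by
  funext x y
  show fderiv ℝ (fun _ => (0 : ℂ)) (x, y) w = 0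
  simp

theorem comm_of_eq_dirDeriv {P Q : (Vec d → Vec d → ℂ) → Vec d → Vec d → ℂ} {u v : Vec d × Vec d}
    (hP : ∀ g, ContDiff ℝ ∞ (uncurry g) → P g = dirDeriv u g)
    (hQ : ∀ g, ContDiff ℝ ∞ (uncurry g) → Q g = dirDeriv v g)
    {f : Vec d → Vec d → ℂ} (hf : ContDiff ℝ ∞ (uncurry f)) : P (Q f) = Q (P f) := by
  rw [hP _ hf, hQ _ hf, hP _ (contDiff_dirDeriv _ hf), hQ _ (contDiff_dirDeriv _ hf),
    dirDeriv_comm _ _ hf]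

theorem pdX_pdX_comm (i j : Fin d) {f : Vec d → Vec d → ℂ} (hf : ContDiff ℝ ∞ (uncurry f)) :
    pdX i (pdX j f) = pdX j (pdX i f) :=
  comm_of_eq_dirDeriv (fun _ hg => pdX_eq_dirDeriv i (hg.differentiable (by simp)))
    (fun _ hg => pdX_eq_dirDeriv j (hg.differentiable (by simp))) hf

theorem pdY_pdY_comm (i j : Fin d) {f : Vec d → Vec d → ℂ} (hf : ContDiff ℝ ∞ (uncurry f)) :
    pdY i (pdY j f) = pdY j (pdY i f) :=
  comm_of_eq_dirDeriv (fun _ hg => pdY_eq_dirDeriv i (hg.differentiable (by simp)))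
    (fun _ hg => pdY_eq_dirDeriv j (hg.differentiable (by simp))) hf

theorem pdY_pdX_comm (i j : Fin d) {f : Vec d → Vec d → ℂ} (hf : ContDiff ℝ ∞ (uncurry f)) :
    pdY i (pdX j f) = pdX j (pdY i f) :=
  comm_of_eq_dirDeriv (fun _ hg => pdY_eq_dirDeriv i (hg.differentiable (by simp)))
    (fun _ hg => pdX_eq_dirDeriv j (hg.differentiable (by simp))) hf

theorem contDiff_mpd (α β : Fin d → ℕ) {f : Vec d → Vec d → ℂ} (hf : ContDiff ℝ ∞ (uncurry f)) :
    ContDiff ℝ ∞ (uncurry (mpd α β f)) :=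
  mapsTo_foldr_iterate pdX mapsTo_pdX α _ (mapsTo_foldr_iterate pdY mapsTo_pdY β _ hf)

theorem mpd_add_single_eq_pdX (α β : Fin d → ℕ) (i : Fin d) {f : Vec d → Vec d → ℂ}
    (hf : ContDiff ℝ ∞ (uncurry f)) : mpd (α + Pi.single i 1) β f = pdX i (mpd α β f) :=
  foldr_iterate_add_single pdX mapsTo_pdX pdX_pdX_comm α (List.nodup_finRange d)
    (List.mem_finRange i) (mapsTo_foldr_iterate pdY mapsTo_pdY β _ hf)

theorem mpd_add_single_eq_pdY (α β : Fin d → ℕ) (i : Fin d) {f : Vec d → Vec d → ℂ}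
    (hf : ContDiff ℝ ∞ (uncurry f)) : mpd α (β + Pi.single i 1) f = pdY i (mpd α β f) := by
  rw [mpd, mpd, foldr_iterate_add_single pdY mapsTo_pdY pdY_pdY_comm β (List.nodup_finRange d)
    (List.mem_finRange i) hf]
  exact (foldr_iterate_commute pdX mapsTo_pdX (fun j _ hg => pdY_pdX_comm i j hg) α _
    (mapsTo_foldr_iterate pdY mapsTo_pdY β _ hf)).symm

end PartialDerivatives

section BoundedDerivatives
variable {E E' F : Type*} [NormedAddCommGroup E] [NormedSpace ℝ E] [NormedAddCommGroup E']
  [NormedSpace ℝ E'] [NormedAddCommGroup F] [NormedSpace ℝ F]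

def HasBoundedDerivs (ψ : E → F) : Prop :=
  ∀ n : ℕ, ∃ M, ∀ x, ‖iteratedFDeriv ℝ n ψ x‖ ≤ M

theorem HasCompactSupport.hasBoundedDerivs {ψ : E → F} (hψ : ContDiff ℝ ∞ ψ)
    (hc : HasCompactSupport ψ) : HasBoundedDerivs ψ := fun n =>
  (hψ.continuous_iteratedFDeriv (by exact_mod_cast le_top)).bounded_above_of_compact_support
    (hc.iteratedFDeriv n)

theorem HasBoundedDerivs.sub {ψ φ : E → F} (hψ : ContDiff ℝ ∞ ψ) (hφ : ContDiff ℝ ∞ φ)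
    (hbψ : HasBoundedDerivs ψ) (hbφ : HasBoundedDerivs φ) : HasBoundedDerivs (ψ - φ) := by
  intro n
  obtain ⟨M, hM⟩ := hbψ n
  obtain ⟨M', hM'⟩ := hbφ n
  refine ⟨M + M', fun x => ?_⟩
  rw [iteratedFDeriv_sub_apply (hψ.of_le (by exact_mod_cast le_top)).contDiffAt
    (hφ.of_le (by exact_mod_cast le_top)).contDiffAt]
  exact (norm_sub_le _ _).trans (add_le_add (hM x) (hM' x))

theorem HasBoundedDerivs.comp_continuousLinearMap {ψ : E → F} (hψ : ContDiff ℝ ∞ ψ)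
    (hb : HasBoundedDerivs ψ) (L : E' →L[ℝ] E) : HasBoundedDerivs (ψ ∘ L) := by
  intro n
  obtain ⟨M, hM⟩ := hb n
  refine ⟨M * ‖L‖ ^ n, fun x => ?_⟩
  rw [L.iteratedFDeriv_comp_right hψ x (by exact_mod_cast le_top)]
  refine (ContinuousMultilinearMap.norm_compContinuousLinearMap_le _ _).trans ?_
  rw [Finset.prod_const, Finset.card_univ, Fintype.card_fin]
  gcongr
  exact hM _

theorem HasBoundedDerivs.fderiv_apply {ψ : E → F} (hψ : ContDiff ℝ ∞ ψ)
    (hb : HasBoundedDerivs ψ) (v : E) : HasBoundedDerivs (fun x => fderiv ℝ ψ x v) := by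
  intro n
  obtain ⟨M, hM⟩ := hb (n + 1)
  refine ⟨‖v‖ * M, fun x => ?_⟩
  refine (norm_iteratedFDeriv_clm_apply_const
    (hψ.fderiv_right (m := ∞) le_rfl).contDiffAt (by exact_mod_cast le_top)).trans ?_
  rw [norm_iteratedFDeriv_fderiv]
  gcongr
  exact hM x

end BoundedDerivatives

section CutoffClass
variable {E : Type*} [NormedAddCommGroup E] [NormedSpace ℝ E]

def cutoffClass (S : Set E) : Set (E → ℝ) :=
  {ψ | ContDiff ℝ ∞ ψ ∧ HasBoundedDerivs ψ ∧ tsupport ψ ⊆ S}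

theorem fderiv_apply_mem_cutoffClass {S : Set E} (hS : IsClosed S) {ψ : E → ℝ}
    (hψ : ψ ∈ cutoffClass S) (v : E) : (fun x => fderiv ℝ ψ x v) ∈ cutoffClass S := by
  obtain ⟨hsmooth, hbdd, hsupp⟩ := hψ
  refine ⟨(hsmooth.fderiv_right (m := ∞) le_rfl).clm_apply contDiff_const,
    hbdd.fderiv_apply hsmooth v, closure_minimal (fun x hx => hsupp ?_) hS⟩
  refine support_fderiv_subset ℝ fun h => hx ?_
  simp [h]

theorem fderiv_ofReal_scaled_mul {ψ : E → ℝ} {G : E → ℂ} {p : E} (hψ : Differentiable ℝ ψ)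
    (hG : DifferentiableAt ℝ G p) (b c : ℝ) (v : E) :
    fderiv ℝ (fun q => ((b * ψ (c • q) : ℝ) : ℂ) * G q) p v
      = ((b * (c * fderiv ℝ ψ (c • p) v) : ℝ) : ℂ) * G p
        + ((b * ψ (c • p) : ℝ) : ℂ) * fderiv ℝ G p v := by
  have hscaled : HasFDerivAt (fun q => ((b * ψ (c • q) : ℝ) : ℂ))
      (Complex.ofRealCLM.comp (b • (fderiv ℝ ψ (c • p)).comp (c • ContinuousLinearMap.id ℝ E))) p :=
    Complex.ofRealCLM.hasFDerivAt.comp p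
      (((hψ (c • p)).hasFDerivAt.comp p ((hasFDerivAt_id p).const_smul c)).const_mul b)
  rw [(hscaled.fun_mul hG.hasFDerivAt).fderiv]
  simp only [Complex.ofReal_mul, ContinuousLinearMap.comp_smulₛₗ, Real.ringHom_apply,
    ContinuousLinearMap.comp_id, add_apply, smul_apply,
    smul_eq_mul, ContinuousLinearMap.comp_apply, Complex.ofRealCLM_apply, Complex.real_smul]
  ring

end CutoffClass

section CutoffTerms
variable {d : ℕ} (ε : ℝ) (a : ℕ → Vec d → Vec d → ℂ)

def cutoffScale (ε : ℝ) (k : ℕ) : ℝ := 8 * (k : ℝ) ^ ((1 : ℝ) / 2 - ε)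

def cutoffTerm (j : ℕ) (ψ : Vec d × Vec d → ℝ) (A B : Fin d → ℕ) : ℕ → Vec d → Vec d → ℂ :=
  fun k x y => ((cutoffScale ε k ^ j * ψ (cutoffScale ε k • (x, y)) : ℝ) : ℂ) * mpd A B (a k) x y

def cutoffTerms (S : Set (Vec d × Vec d)) : Set (ℕ → Vec d → Vec d → ℂ) :=
  {cutoffTerm ε a j ψ A B | (j : ℕ) (ψ ∈ cutoffClass S) (A : Fin d → ℕ) (B : Fin d → ℕ)}

variable {ε a}

theorem contDiff_cutoffTerm {j : ℕ} {ψ : Vec d × Vec d → ℝ} (hψ : ContDiff ℝ ∞ ψ) (A B : Fin d → ℕ)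
    {k : ℕ} (hak : ContDiff ℝ ∞ (uncurry (a k))) :
    ContDiff ℝ ∞ (uncurry (cutoffTerm ε a j ψ A B k)) :=
  (Complex.ofRealCLM.contDiff.comp
    (contDiff_const.mul (hψ.comp (contDiff_id.const_smul _)))).mul (contDiff_mpd A B hak)

theorem dirDeriv_cutoffTerm {j : ℕ} {ψ : Vec d × Vec d → ℝ} (hψ : ContDiff ℝ ∞ ψ)
    (A B : Fin d → ℕ) {k : ℕ} (hak : ContDiff ℝ ∞ (uncurry (a k))) (w : Vec d × Vec d) :
    dirDeriv w (cutoffTerm ε a j ψ A B k)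
      = cutoffTerm ε a (j + 1) (fun q => fderiv ℝ ψ q w) A B k
        + fun x y => ((cutoffScale ε k ^ j * ψ (cutoffScale ε k • (x, y)) : ℝ) : ℂ) *
          dirDeriv w (mpd A B (a k)) x y := by
  funext x y
  have := fderiv_ofReal_scaled_mul (hψ.differentiable (by simp))
    ((contDiff_mpd A B hak).differentiable (by simp) (x, y)) (cutoffScale ε k ^ j)
    (cutoffScale ε k) w
  simp only [dirDeriv, Pi.add_apply, cutoffTerm]
  convert this using 2
  · rfl
  · simp only [uncurry_apply_pair]
    push_cast
    ring

end CutoffTerms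

section CutoffTermClosure
variable {d : ℕ} {ε : ℝ} {a : ℕ → Vec d → Vec d → ℂ} {S : Set (Vec d × Vec d)}

theorem contDiff_of_mem_closure_cutoffTerms (ha : ∀ k, ContDiff ℝ ∞ (uncurry (a k)))
    {Φ : ℕ → Vec d → Vec d → ℂ} (hΦ : Φ ∈ AddSubmonoid.closure (cutoffTerms ε a S)) (k : ℕ) :
    ContDiff ℝ ∞ (uncurry (Φ k)) := by
  induction hΦ using AddSubmonoid.closure_induction with
  | mem Φ hΦ =>
    obtain ⟨j, ψ, hψ, A, B, rfl⟩ := hΦ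
    exact contDiff_cutoffTerm hψ.1 A B (ha k)
  | zero => exact contDiff_const
  | add Φ Ψ _ _ hΦ hΨ => exact hΦ.add hΨ

theorem dirDeriv_comp_mem_closure_cutoffTerms (ha : ∀ k, ContDiff ℝ ∞ (uncurry (a k)))
    (hS : IsClosed S) (w : Vec d × Vec d)
    (hw : ∀ A B, ∃ A' B', ∀ k, dirDeriv w (mpd A B (a k)) = mpd A' B' (a k))
    {Φ : ℕ → Vec d → Vec d → ℂ} (hΦ : Φ ∈ AddSubmonoid.closure (cutoffTerms ε a S)) :
    dirDeriv w ∘ Φ ∈ AddSubmonoid.closure (cutoffTerms ε a S) := by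
  induction hΦ using AddSubmonoid.closure_induction with
  | mem Φ hΦ =>
    obtain ⟨j, ψ, hψ, A, B, rfl⟩ := hΦ
    obtain ⟨A', B', hA'B'⟩ := hw A B
    have hsplit : dirDeriv w ∘ cutoffTerm ε a j ψ A B
        = cutoffTerm ε a (j + 1) (fun q => fderiv ℝ ψ q w) A B + cutoffTerm ε a j ψ A' B' := by
      funext k
      rw [comp_apply, dirDeriv_cutoffTerm hψ.1 A B (ha k), hA'B']
      rfl
    rw [hsplit]
    exact add_mem
      (AddSubmonoid.subset_closure ⟨_, _, fderiv_apply_mem_cutoffClass hS hψ w, A, B, rfl⟩)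
      (AddSubmonoid.subset_closure ⟨_, _, hψ, A', B', rfl⟩)
  | zero =>
    have hzero : dirDeriv w ∘ (0 : ℕ → Vec d → Vec d → ℂ) = 0 := funext fun _ => dirDeriv_zero w
    rw [hzero]
    exact zero_mem _
  | add Φ Ψ hΦ hΨ ihΦ ihΨ =>
    have hsplit : dirDeriv w ∘ (Φ + Ψ) = dirDeriv w ∘ Φ + dirDeriv w ∘ Ψ := funext fun k =>
      dirDeriv_add w ((contDiff_of_mem_closure_cutoffTerms ha hΦ k).differentiable (by simp))
        ((contDiff_of_mem_closure_cutoffTerms ha hΨ k).differentiable (by simp))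
    rw [hsplit]
    exact add_mem ihΦ ihΨ

theorem comp_mem_closure_cutoffTerms_of_eq_dirDeriv (ha : ∀ k, ContDiff ℝ ∞ (uncurry (a k)))
    (hS : IsClosed S) {P : (Vec d → Vec d → ℂ) → Vec d → Vec d → ℂ} {w : Vec d × Vec d}
    (hP : ∀ g, ContDiff ℝ ∞ (uncurry g) → P g = dirDeriv w g)
    (hPmpd : ∀ A B, ∃ A' B', ∀ k, P (mpd A B (a k)) = mpd A' B' (a k))
    {Φ : ℕ → Vec d → Vec d → ℂ} (hΦ : Φ ∈ AddSubmonoid.closure (cutoffTerms ε a S)) :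
    P ∘ Φ ∈ AddSubmonoid.closure (cutoffTerms ε a S) := by
  have hcomp : P ∘ Φ = dirDeriv w ∘ Φ :=
    funext fun k => hP _ (contDiff_of_mem_closure_cutoffTerms ha hΦ k)
  rw [hcomp]
  refine dirDeriv_comp_mem_closure_cutoffTerms ha hS w (fun A B => ?_) hΦ
  obtain ⟨A', B', h⟩ := hPmpd A B
  exact ⟨A', B', fun k => (hP _ (contDiff_mpd A B (ha k))).symm.trans (h k)⟩

theorem mpd_comp_mem_closure_cutoffTerms (ha : ∀ k, ContDiff ℝ ∞ (uncurry (a k)))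
    (hS : IsClosed S) (α β : Fin d → ℕ) {Φ : ℕ → Vec d → Vec d → ℂ}
    (hΦ : Φ ∈ AddSubmonoid.closure (cutoffTerms ε a S)) :
    mpd α β ∘ Φ ∈ AddSubmonoid.closure (cutoffTerms ε a S) := by
  refine foldr_iterate_comp_mem pdX (fun i _ hΨ => ?_) α _
    (foldr_iterate_comp_mem pdY (fun i _ hΨ => ?_) β _ hΦ)
  · exact comp_mem_closure_cutoffTerms_of_eq_dirDeriv ha hS
      (fun _ hg => pdX_eq_dirDeriv i (hg.differentiable (by simp)))
      (fun A B => ⟨A + Pi.single i 1, B, fun k => (mpd_add_single_eq_pdX A B i (ha k)).symm⟩) hΨ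
  · exact comp_mem_closure_cutoffTerms_of_eq_dirDeriv ha hS
      (fun _ hg => pdY_eq_dirDeriv i (hg.differentiable (by simp)))
      (fun A B => ⟨A, B + Pi.single i 1, fun k => (mpd_add_single_eq_pdY A B i (ha k)).symm⟩) hΨ

end CutoffTermClosure

section Estimates
variable {d : ℕ} {ε : ℝ}

theorem cutoffScale_pow_le (hε : 0 ≤ ε) {k : ℕ} (hk : 1 ≤ k) (j : ℕ) :
    cutoffScale ε k ^ j ≤ 8 ^ j * (k : ℝ) ^ ((j : ℝ) / 2) := by
  have hk' : (1 : ℝ) ≤ k := by exact_mod_cast hk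
  calc cutoffScale ε k ^ j ≤ (8 * (k : ℝ) ^ ((1 : ℝ) / 2)) ^ j := by
        unfold cutoffScale
        gcongr
        linarith
    _ = 8 ^ j * (k : ℝ) ^ ((j : ℝ) / 2) := by
        rw [mul_pow, ← Real.rpow_natCast ((k : ℝ) ^ ((1 : ℝ) / 2)), ← Real.rpow_mul (by positivity)]
        ring_nf

theorem one_add_sqrt_mul_add_pow_le {k : ℕ} (hk : 1 ≤ k) {u v R : ℝ} (hu : 0 ≤ u) (hv : 0 ≤ v)
    (huR : u ≤ R) (hvR : v ≤ R) (l : ℕ) :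
    (1 + √k * u + √k * v) ^ l ≤ (1 + 2 * R) ^ l * (k : ℝ) ^ ((l : ℝ) / 2) := by
  have hsqrt : 1 ≤ √(k : ℝ) := Real.one_le_sqrt.mpr (by exact_mod_cast hk)
  calc (1 + √k * u + √k * v) ^ l ≤ ((1 + 2 * R) * √k) ^ l := by
        gcongr
        nlinarith
    _ = (1 + 2 * R) ^ l * (k : ℝ) ^ ((l : ℝ) / 2) := by
        rw [mul_pow, Real.sqrt_eq_rpow, ← Real.rpow_natCast ((k : ℝ) ^ ((1 : ℝ) / 2)),
          ← Real.rpow_mul (by positivity)]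
        ring_nf

theorem rpow_le_one_add_sqrt_mul_rpow {k : ℕ} (hk : 0 < k) {δ r N' : ℝ} (hδ : 0 ≤ δ)
    (hsep : δ ≤ cutoffScale ε k * r) (hN' : 0 ≤ N') :
    (δ / 8) ^ N' * (k : ℝ) ^ (ε * N') ≤ (1 + √k * r) ^ N' := by
  have hk' : (0 : ℝ) < k := by exact_mod_cast hk
  have hsqrt : √(k : ℝ) = (k : ℝ) ^ ε * (cutoffScale ε k / 8) := by
    rw [cutoffScale, Real.sqrt_eq_rpow, mul_div_cancel_left₀ _ (by norm_num : (8 : ℝ) ≠ 0),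
      ← Real.rpow_add hk']
    ring_nf
  have hbase : δ / 8 * (k : ℝ) ^ ε ≤ 1 + √k * r := by
    rw [hsqrt]
    nlinarith [Real.rpow_pos_of_pos hk' ε]
  calc (δ / 8) ^ N' * (k : ℝ) ^ (ε * N') = (δ / 8 * (k : ℝ) ^ ε) ^ N' := by
        rw [Real.mul_rpow (by positivity) (by positivity), Real.rpow_mul hk'.le]
    _ ≤ (1 + √k * r) ^ N' := by gcongr

end Estimates

section TermBound
variable {d : ℕ} {ε : ℝ} {a : ℕ → Vec d → Vec d → ℂ}

theorem norm_cutoffTerm_le (hε : 0 ≤ ε) {j : ℕ} {ψ : Vec d × Vec d → ℝ} {A B : Fin d → ℕ}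
    {k : ℕ} (hk : 1 ≤ k) {δ M R Ca e N' : ℝ} {l : ℕ} (hδ : 0 < δ) (hCa : 0 ≤ Ca) (hN' : 0 ≤ N')
    (hsupp : tsupport ψ ⊆ {q | δ ≤ dist q.1 q.2}) (hM : ∀ q, |ψ q| ≤ M) {x y : Vec d}
    (hx : ‖x‖ ≤ R) (hy : ‖y‖ ≤ R)
    (hmpd : ‖mpd A B (a k) x y‖ ≤
      Ca * (k : ℝ) ^ e * (1 + √k * ‖x‖ + √k * ‖y‖) ^ l / (1 + √k * ‖x - y‖) ^ N') :
    ‖cutoffTerm ε a j ψ A B k x y‖ ≤ 8 ^ j * M * Ca * (1 + 2 * R) ^ l / (δ / 8) ^ N' *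
      (k : ℝ) ^ ((j : ℝ) / 2 + e + (l : ℝ) / 2 - ε * N') := by
  have hk' : (0 : ℝ) < k := by exact_mod_cast hk
  have hc : 0 < cutoffScale ε k := by unfold cutoffScale; positivity
  have hM0 : 0 ≤ M := (abs_nonneg _).trans (hM 0)
  have hR : 0 ≤ R := (norm_nonneg x).trans hx
  have hnorm : ‖cutoffTerm ε a j ψ A B k x y‖
      = cutoffScale ε k ^ j * |ψ (cutoffScale ε k • (x, y))| * ‖mpd A B (a k) x y‖ := by
    simp only [cutoffTerm, norm_mul, Complex.norm_real, Real.norm_eq_abs,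
      abs_of_nonneg (pow_nonneg hc.le j)]
  rw [hnorm]
  set c := cutoffScale ε k
  rcases eq_or_ne (ψ (c • (x, y))) 0 with hz | hz
  · rw [hz, abs_zero, mul_zero, zero_mul]
    positivity
  have hsep : δ ≤ c * ‖x - y‖ := by
    have h := hsupp (subset_tsupport _ hz)
    rwa [Set.mem_ofPred_eq, Prod.smul_fst, Prod.smul_snd, dist_smul₀, Real.norm_of_nonneg hc.le,
      dist_eq_norm] at h
  calc c ^ j * |ψ (c • (x, y))| * ‖mpd A B (a k) x y‖
      ≤ (8 ^ j * (k : ℝ) ^ ((j : ℝ) / 2)) * M *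
        (Ca * (k : ℝ) ^ e * ((1 + 2 * R) ^ l * (k : ℝ) ^ ((l : ℝ) / 2)) /
          ((δ / 8) ^ N' * (k : ℝ) ^ (ε * N'))) := by
        gcongr
        · exact cutoffScale_pow_le hε hk j
        · exact hM _
        · refine hmpd.trans ?_
          gcongr
          · exact one_add_sqrt_mul_add_pow_le hk (norm_nonneg x) (norm_nonneg y) hx hy l
          · exact rpow_le_one_add_sqrt_mul_rpow (by omega) hδ.le hsep hN'
    _ = 8 ^ j * M * Ca * (1 + 2 * R) ^ l / (δ / 8) ^ N' *
        (k : ℝ) ^ ((j : ℝ) / 2 + e + (l : ℝ) / 2 - ε * N') := by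
        rw [Real.rpow_sub hk', Real.rpow_add hk', Real.rpow_add hk']
        field_simp

end TermBound

theorem HasCompactSupport.mul_prod {X Y M : Type*} [TopologicalSpace X] [TopologicalSpace Y]
    [MulZeroClass M] {f : X → M} {g : Y → M} (hf : HasCompactSupport f)
    (hg : HasCompactSupport g) : HasCompactSupport (fun q : X × Y => f q.1 * g q.2) := by
  refine HasCompactSupport.intro' (hf.isCompact.prod hg.isCompact)
    ((isClosed_tsupport f).prod (isClosed_tsupport g)) fun q hq => ?_
  rcases not_and_or.mp (Set.mem_prod.not.mp hq) with h | h
  · rw [image_eq_zero_of_notMem_tsupport h, zero_mul]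
  · rw [image_eq_zero_of_notMem_tsupport h, mul_zero]

section InitialCutoff
variable {E : Type*} [NormedAddCommGroup E] [NormedSpace ℝ E]

theorem one_sub_mul_mem_cutoffClass {χ χt : E → ℝ} (hχ : ContDiff ℝ ∞ χ) (hχc : HasCompactSupport χ)
    (hχt : ContDiff ℝ ∞ χt) (hχtc : HasCompactSupport χt) {δ : ℝ}
    (hsep : ∀ x ∈ tsupport (fun z => 1 - χt z), ∀ y ∈ tsupport χ, δ ≤ dist x y) :
    (fun q : E × E => (1 - χt q.1) * χ q.2) ∈ cutoffClass {q : E × E | δ ≤ dist q.1 q.2} := by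
  have hprod : ContDiff ℝ ∞ (fun q : E × E => χt q.1 * χ q.2) :=
    (hχt.comp contDiff_fst).mul (hχ.comp contDiff_snd)
  have hsplit : (fun q : E × E => (1 - χt q.1) * χ q.2)
      = χ ∘ ContinuousLinearMap.snd ℝ E E - fun q => χt q.1 * χ q.2 := by
    funext q
    simp only [Pi.sub_apply, comp_apply, ContinuousLinearMap.coe_snd']
    ring
  refine ⟨(contDiff_const.sub (hχt.comp contDiff_fst)).mul (hχ.comp contDiff_snd), ?_, ?_⟩
  · rw [hsplit]
    exact HasBoundedDerivs.sub (hχ.comp (ContinuousLinearMap.snd ℝ E E).contDiff) hprod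
      ((hχc.hasBoundedDerivs hχ).comp_continuousLinearMap hχ _)
      ((hχtc.mul_prod hχc).hasBoundedDerivs hprod)
  · refine (closure_minimal (fun q hq => ?_)
      ((isClosed_tsupport _).prod (isClosed_tsupport _))).trans fun q hq => hsep q.1 hq.1 q.2 hq.2
    obtain ⟨h1, h2⟩ := mul_ne_zero_iff.mp hq
    exact ⟨subset_tsupport _ h1, subset_tsupport _ h2⟩

end InitialCutoff

section Negligibility
variable {d : ℕ}

def IsBigORpowOn (K : Set (Vec d × Vec d)) (s : ℝ) (Φ : ℕ → Vec d → Vec d → ℂ) : Prop :=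
  (fun q : ℕ × (Vec d × Vec d) => Φ q.1 q.2.1 q.2.2) =O[atTop ×ˢ 𝓟 K] fun q => (q.1 : ℝ) ^ s

theorem IsBigORpowOn.exists_bound {K : Set (Vec d × Vec d)} {s : ℝ} {Φ : ℕ → Vec d → Vec d → ℂ}
    (h : IsBigORpowOn K s Φ) :
    ∃ C : ℝ, 0 < C ∧ ∃ k₀ : ℕ, ∀ k, k₀ ≤ k → ∀ p ∈ K, ‖Φ k p.1 p.2‖ ≤ C * (k : ℝ) ^ s := by
  obtain ⟨C, hC, hbound⟩ := h.exists_pos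
  obtain ⟨k₀, hk₀⟩ := eventually_atTop.mp (eventually_prod_principal_iff.mp hbound.bound)
  refine ⟨C, hC, k₀, fun k hk p hp => ?_⟩
  simpa [Real.norm_of_nonneg (Real.rpow_nonneg k.cast_nonneg s)] using hk₀ k hk p hp

variable {m ε δ : ℝ} {a : ℕ → Vec d → Vec d → ℂ}

theorem isBigORpowOn_cutoffTerm (hε : 0 < ε) (ha : SymbClass d m a) (hδ : 0 < δ)
    {ψ : Vec d × Vec d → ℝ} (hψ : ψ ∈ cutoffClass {q | δ ≤ dist q.1 q.2}) (j : ℕ)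
    (A B : Fin d → ℕ) {K : Set (Vec d × Vec d)} (hK : Bornology.IsBounded K) (N : ℝ) :
    IsBigORpowOn K (-N) (cutoffTerm ε a j ψ A B) := by
  obtain ⟨M, hM⟩ := hψ.2.1 0
  obtain ⟨R, hR⟩ := hK.subset_closedBall 0
  obtain ⟨l, k₁, hsymb⟩ := ha.2 A B
  set e := m + (((∑ i, A i) + (∑ i, B i) : ℕ) : ℝ) / 2
  set s := (j : ℝ) / 2 + e + (l : ℝ) / 2 with hs
  -- `N'` is chosen with `ε N' ≥ N + s`, so that the off-diagonal decay `k^{-εN'}` beats `k^s`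
  have hN' : 0 < (|N| + |s| + 1) / ε := by positivity
  obtain ⟨Ca, hCa, hbound⟩ := hsymb _ hN'
  refine IsBigO.of_bound (8 ^ j * M * Ca * (1 + 2 * R) ^ l / (δ / 8) ^ ((|N| + |s| + 1) / ε)) ?_
  refine eventually_prod_principal_iff.mpr (eventually_atTop.mpr ⟨max k₁ 1, fun k hk p hp => ?_⟩)
  have hk1 : 1 ≤ k := le_of_max_le_right hk
  have hp' : ‖p‖ ≤ R := by simpa using hR hp
  have hM0 : 0 ≤ M := (norm_nonneg _).trans (hM 0)
  have hR0 : 0 ≤ R := (norm_nonneg p).trans hp'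
  rw [Real.norm_of_nonneg (Real.rpow_nonneg k.cast_nonneg _)]
  refine (norm_cutoffTerm_le hε.le hk1 hδ hCa.le hN'.le hψ.2.2
    (fun q => by simpa using hM q) ((norm_fst_le p).trans hp') ((norm_snd_le p).trans hp')
    (hbound k (le_of_max_le_left hk) p.1 p.2)).trans ?_
  gcongr
  · exact_mod_cast hk1
  · rw [mul_div_cancel₀ _ hε.ne']
    linarith [le_abs_self s, le_abs_self N, hs]

theorem isBigORpowOn_of_mem_closure_cutoffTerms (hε : 0 < ε) (ha : SymbClass d m a) (hδ : 0 < δ)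
    {K : Set (Vec d × Vec d)} (hK : Bornology.IsBounded K) (N : ℝ) {Φ : ℕ → Vec d → Vec d → ℂ}
    (hΦ : Φ ∈ AddSubmonoid.closure (cutoffTerms ε a {q | δ ≤ dist q.1 q.2})) :
    IsBigORpowOn K (-N) Φ := by
  induction hΦ using AddSubmonoid.closure_induction with
  | mem Φ hΦ =>
    obtain ⟨j, ψ, hψ, A, B, rfl⟩ := hΦ
    exact isBigORpowOn_cutoffTerm hε ha hδ hψ j A B hK N
  | zero => exact isBigO_zero _ _
  | add Φ Ψ _ _ hΦ hΨ => exact hΦ.add hΨ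

end Negligibility

theorem stmt15_general (d : ℕ) (m : ℝ) (ε : ℝ) (hε0 : 0 < ε)
    (a : ℕ → Vec d → Vec d → ℂ) (ha : SymbClass d m a)
    (χ χt : Vec d → ℝ)
    (hχ : ContDiff ℝ (⊤ : ℕ∞) χ) (hχc : HasCompactSupport χ)
    (hχt : ContDiff ℝ (⊤ : ℕ∞) χt) (hχtc : HasCompactSupport χt)
    (hdist : ∃ δ : ℝ, 0 < δ ∧
      ∀ x ∈ tsupport (fun z => 1 - χt z), ∀ y ∈ tsupport χ, δ ≤ dist x y) :
    ∀ K : Set (Vec d × Vec d), IsCompact K → ∀ α β : Fin d → ℕ, ∀ N : ℕ,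
      ∃ C : ℝ, 0 < C ∧ ∃ k₀ : ℕ, ∀ k, k₀ ≤ k → ∀ p ∈ K,
        ‖mpd α β
            (fun x y =>
              ((1 - χt ((8 * (k : ℝ) ^ ((1 : ℝ) / 2 - ε)) • x) : ℝ) : ℂ) * a k x y *
                ((χ ((8 * (k : ℝ) ^ ((1 : ℝ) / 2 - ε)) • y) : ℝ) : ℂ))
            p.1 p.2‖ ≤ C * (k : ℝ) ^ (-(N : ℝ)) := by
  intro K hK α β N
  obtain ⟨δ, hδ, hsep⟩ := hdist
  have hterm : cutoffTerm ε a 0 (fun q => (1 - χt q.1) * χ q.2) 0 0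
      = fun k x y => ((1 - χt (cutoffScale ε k • x) : ℝ) : ℂ) * a k x y *
          ((χ (cutoffScale ε k • y) : ℝ) : ℂ) := by
    funext k x y
    simp only [cutoffTerm, pow_zero, one_mul, Prod.smul_mk, mpd_zero_zero]
    push_cast
    ring
  have hcutoff := one_sub_mul_mem_cutoffClass hχ hχc hχt hχtc hsep
  have hmem := mpd_comp_mem_closure_cutoffTerms (ε := ε) ha.1
    (isClosed_le continuous_const (continuous_fst.dist continuous_snd)) α β
    (AddSubmonoid.subset_closure ⟨0, _, hcutoff, 0, 0, rfl⟩)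
  rw [hterm] at hmem
  exact (isBigORpowOn_of_mem_closure_cutoffTerms hε0 ha hδ hK.isBounded N hmem).exists_bound

/-- Off-diagonal negligibility: let `a ∈ Ŝ^m(ℝ^d × ℝ^d)`, `ε ∈ (0,1/2]`, and let
`χ, χ̃ ∈ C_c^∞(ℝ^d;[0,1])` with `supp χ ⊆ {|y| ≤ 1}` and `dist(supp(1−χ̃), supp χ) > 0`.
Set `χ_k(y) := χ(8k^{1/2−ε}y)` and `χ̃_k(x) := χ̃(8k^{1/2−ε}x)`. Then for every compact
`K ⊆ ℝ^d × ℝ^d`, all multi-indices `α, β` and every `N ∈ ℕ` there are `C > 0` and `k₀` such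
that for all `k ≥ k₀`,
`sup_{(x,y)∈K} |∂_x^α ∂_y^β [(1−χ̃_k(x))·a(x,y,k)·χ_k(y)]| ≤ C k^{−N}`. -/
theorem stmt15 (d : ℕ) (m : ℝ) (ε : ℝ) (hε0 : 0 < ε) (hε : ε ≤ 1 / 2)
    (a : ℕ → Vec d → Vec d → ℂ) (ha : SymbClass d m a)
    (χ χt : Vec d → ℝ)
    (hχ : ContDiff ℝ (⊤ : ℕ∞) χ) (hχc : HasCompactSupport χ)
    (hχt : ContDiff ℝ (⊤ : ℕ∞) χt) (hχtc : HasCompactSupport χt)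
    (hχ01 : ∀ y, 0 ≤ χ y ∧ χ y ≤ 1) (hχt01 : ∀ x, 0 ≤ χt x ∧ χt x ≤ 1)
    (hχball : tsupport χ ⊆ Metric.closedBall 0 1)
    (hdist : ∃ δ : ℝ, 0 < δ ∧
      ∀ x ∈ tsupport (fun z => 1 - χt z), ∀ y ∈ tsupport χ, δ ≤ dist x y) :
    ∀ K : Set (Vec d × Vec d), IsCompact K → ∀ α β : Fin d → ℕ, ∀ N : ℕ,
      ∃ C : ℝ, 0 < C ∧ ∃ k₀ : ℕ, ∀ k, k₀ ≤ k → ∀ p ∈ K,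
        ‖mpd α β
            (fun x y =>
              ((1 - χt ((8 * (k : ℝ) ^ ((1 : ℝ) / 2 - ε)) • x) : ℝ) : ℂ) * a k x y *
                ((χ ((8 * (k : ℝ) ^ ((1 : ℝ) / 2 - ε)) • y) : ℝ) : ℂ))
            p.1 p.2‖ ≤ C * (k : ℝ) ^ (-(N : ℝ)) :=
  stmt15_general d m ε hε0 a ha χ χt hχ hχc hχt hχtc hdist
end
end

section
/- Let H₀, H₁, H₂ be complex Hilbert spaces, S₀ : H₀ →ₚ H₁ a densely defined closed unbounded linear operator (so that ker S₀ is a closed subspace of H₀), and S₁ : H₁ →ₚ H₂ a densely defined unbounded linear operator, such that S₀x ∈ dom S₁ and S₁(S₀x) = 0 for every x ∈ dom S₀. Let u ∈ dom S₀ and suppose β ∈ H₁ satisfies: β ∈ dom S₀†, S₀†β ∈ dom S₀, β ∈ dom S₁, S₁β ∈ dom S₁†, and S₀(S₀†β) + S₁†(S₁β) = S₀u. Then u − S₀†β ∈ ker S₀, S₀†β is orthogonal to ker S₀, and u − S₀†β equals the orthogonal projection of u onto the closed subspace ker S₀. -/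
/-!
Write `b = S₀†β`. Since `S₀(u - b) = S₁†(S₁β)` and `S₁ S₀ = 0`,
`‖S₀(u - b)‖² = ⟪S₁†(S₁β), S₀(u - b)⟫ = ⟪S₁β, S₁ S₀(u - b)⟫ = 0`, so `u - b ∈ ker S₀`.
For `w ∈ ker S₀`, `⟪S₀†β, w⟫ = ⟪β, S₀w⟫ = 0`, so `u = (u - b) + b` is the decomposition of `u`
along `ker S₀ ⊕ (ker S₀)⊥`, and Pythagoras makes `u - b` the point of `ker S₀` closest to `u`.
-/

open scoped InnerProductSpace

namespace LinearPMap

theorem IsClosed.isClosed_setOf_apply_eq_zero {R E F : Type*} [CommRing R]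
    [AddCommGroup E] [Module R E] [TopologicalSpace E]
    [AddCommGroup F] [Module R F] [TopologicalSpace F]
    {f : E →ₗ.[R] F} (hf : f.IsClosed) :
    _root_.IsClosed {x : E | ∃ hx : x ∈ f.domain, f ⟨x, hx⟩ = 0} := by
  have hker : {x : E | ∃ hx : x ∈ f.domain, f ⟨x, hx⟩ = 0} =
      (fun x : E => (x, (0 : F))) ⁻¹' (f.graph : Set (E × F)) := by
    ext x
    simp only [Set.mem_ofPred_eq, Set.mem_preimage, SetLike.mem_coe, mem_graph_iff]
    constructor
    · rintro ⟨hx, hfx⟩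
      exact ⟨⟨x, hx⟩, rfl, hfx⟩
    · rintro ⟨y, rfl, hfy⟩
      exact ⟨y.2, hfy⟩
  rw [hker]
  exact hf.preimage (Continuous.prodMk_left 0)

variable {𝕜 E F G : Type*} [RCLike 𝕜]
  [NormedAddCommGroup E] [InnerProductSpace 𝕜 E]
  [NormedAddCommGroup F] [InnerProductSpace 𝕜 F]
  [NormedAddCommGroup G] [InnerProductSpace 𝕜 G]

theorem inner_adjoint_apply_eq_zero_of_apply_eq_zero [CompleteSpace E] {T : E →ₗ.[𝕜] F}
    (hT : Dense (T.domain : Set E)) (y : T†.domain) (x : T.domain) (hx : T x = 0) :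
    ⟪T† y, (x : E)⟫_𝕜 = 0 := by
  rw [adjoint_isFormalAdjoint hT y x, hx, inner_zero_right]

theorem apply_eq_zero_of_eq_adjoint_apply [CompleteSpace F] {T : E →ₗ.[𝕜] F} {S : F →ₗ.[𝕜] G}
    (hS : Dense (S.domain : Set F)) {x : T.domain}
    (hcomp : ∃ h : T x ∈ S.domain, S ⟨T x, h⟩ = 0) {y : S†.domain} (hxy : T x = S† y) :
    T x = 0 := by
  obtain ⟨h, hSTx⟩ := hcomp
  have hinner := inner_adjoint_apply_eq_zero_of_apply_eq_zero hS y ⟨T x, h⟩ hSTx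
  rw [← hxy] at hinner
  exact inner_self_eq_zero.mp hinner

end LinearPMap

theorem norm_sub_le_norm_sub_of_inner_eq_zero {𝕜 E : Type*} [RCLike 𝕜]
    [NormedAddCommGroup E] [InnerProductSpace 𝕜 E] {u p v : E}
    (h : ⟪u - p, p - v⟫_𝕜 = 0) : ‖u - p‖ ≤ ‖u - v‖ := by
  have hpyth := norm_add_sq_eq_norm_sq_add_norm_sq_of_inner_eq_zero (u - p) (p - v) h
  rw [sub_add_sub_cancel] at hpyth
  exact le_of_sq_le_sq (by nlinarith [sq_nonneg ‖p - v‖]) (norm_nonneg _)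

/-- Abstract Hodge-type decomposition for the Bergman projection: let `S₀ : H₀ →ₚ H₁` be a
densely defined closed operator (so that `ker S₀` is closed) and `S₁ : H₁ →ₚ H₂` a densely
defined operator with `S₁ ∘ S₀ = 0`. Let `u ∈ dom S₀` and suppose `β` satisfies `β ∈ dom S₀†`,
`S₀†β ∈ dom S₀`, `β ∈ dom S₁`, `S₁β ∈ dom S₁†`, and `S₀(S₀†β) + S₁†(S₁β) = S₀u`. Then
`u − S₀†β ∈ ker S₀`, `S₀†β ⟂ ker S₀`, and `u − S₀†β` is the orthogonal projection of `u`
onto the closed subspace `ker S₀` (equivalently, the point of `ker S₀` closest to `u`). -/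
theorem stmt19 {H₀ H₁ H₂ : Type*}
    [NormedAddCommGroup H₀] [InnerProductSpace ℂ H₀] [CompleteSpace H₀]
    [NormedAddCommGroup H₁] [InnerProductSpace ℂ H₁] [CompleteSpace H₁]
    [NormedAddCommGroup H₂] [InnerProductSpace ℂ H₂] [CompleteSpace H₂]
    (S₀ : H₀ →ₗ.[ℂ] H₁) (S₁ : H₁ →ₗ.[ℂ] H₂)
    (hS₀ : Dense (S₀.domain : Set H₀)) (hS₁ : Dense (S₁.domain : Set H₁))
    (hS₀closed : S₀.IsClosed)
    (hcomp : ∀ x : S₀.domain, ∃ h : (S₀ x : H₁) ∈ S₁.domain, S₁ ⟨S₀ x, h⟩ = 0)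
    (u : H₀) (hu : u ∈ S₀.domain)
    (β : H₁) (hβ : β ∈ S₀.adjoint.domain)
    (hβ₀ : S₀.adjoint ⟨β, hβ⟩ ∈ S₀.domain)
    (hβ₁ : β ∈ S₁.domain)
    (hβ₂ : S₁ ⟨β, hβ₁⟩ ∈ S₁.adjoint.domain)
    (hlap : S₀ ⟨S₀.adjoint ⟨β, hβ⟩, hβ₀⟩ + S₁.adjoint ⟨S₁ ⟨β, hβ₁⟩, hβ₂⟩ =
      S₀ ⟨u, hu⟩) :
    IsClosed {x : H₀ | ∃ hx : x ∈ S₀.domain, S₀ ⟨x, hx⟩ = 0} ∧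
    (∃ h : u - S₀.adjoint ⟨β, hβ⟩ ∈ S₀.domain,
      S₀ ⟨u - S₀.adjoint ⟨β, hβ⟩, h⟩ = 0) ∧
    (∀ w : H₀, ∀ hw : w ∈ S₀.domain, S₀ ⟨w, hw⟩ = 0 →
      (inner ℂ (S₀.adjoint ⟨β, hβ⟩) w : ℂ) = 0) ∧
    ∀ v : H₀, (∃ hv : v ∈ S₀.domain, S₀ ⟨v, hv⟩ = 0) →
      ‖u - (u - S₀.adjoint ⟨β, hβ⟩)‖ ≤ ‖u - v‖ := by
  have horth := LinearPMap.inner_adjoint_apply_eq_zero_of_apply_eq_zero hS₀ ⟨β, hβ⟩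
  set x : S₀.domain := ⟨u, hu⟩ - ⟨_, hβ₀⟩
  have hS₀x : S₀ x = S₁.adjoint ⟨S₁ ⟨β, hβ₁⟩, hβ₂⟩ := by
    rw [LinearPMap.map_sub, ← hlap, add_sub_cancel_left]
  have hker_x : S₀ x = 0 := LinearPMap.apply_eq_zero_of_eq_adjoint_apply hS₁ (hcomp x) hS₀x
  refine ⟨hS₀closed.isClosed_setOf_apply_eq_zero, ⟨x.2, hker_x⟩,
    fun w hw => horth ⟨w, hw⟩, ?_⟩
  rintro v ⟨hv, hv0⟩
  refine norm_sub_le_norm_sub_of_inner_eq_zero (𝕜 := ℂ) ?_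
  rw [sub_sub_cancel]
  exact horth (x - ⟨v, hv⟩) (by rw [LinearPMap.map_sub, hker_x, hv0, sub_zero])
end
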